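/- Let 𝓡 be a nonempty compact subset of S → A → ℝ and let C(𝓡) = {R : S → A → ℝ | ∀ s, ∃ R' ∈ 𝓡, R s = R' s}. Let Π denote the set of policies. Then for every v : S → ℝ and every state s, the robust Bellman optimal operator applied to 𝓡 agrees with the one applied to C(𝓡): ⨆_{π ∈ Π} ⨅_{R ∈ 𝓡} (∑_a π s a * R(s,a) + γ * ∑_{s'} P^π(s,s') * v(s')) = ⨆_{π ∈ Π} ⨅_{R ∈ C(𝓡)} (∑_a π s a * R(s,a) + γ * ∑_{s'} P^π(s,s') * v(s')). -/

import Mathlib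

open Finset

/-- `P^π(s,s') = ∑ a, π s a * P s a s'`. -/
noncomputable def Pmat {S A : Type*} [Fintype A] (P : S → A → S → ℝ) (π : S → A → ℝ) :
    Matrix S S ℝ := fun s s' => ∑ a, π s a * P s a s'

/-- `C(𝓡)`, the s-rectangular hull of `𝓡`. -/
def CRect {S A : Type*} (𝓡 : Set (S → A → ℝ)) : Set (S → A → ℝ) :=
  {R : S → A → ℝ | ∀ s, ∃ R' ∈ 𝓡, R s = R' s}

/-- the set of stationary policies. -/
def Policies (S A : Type*) [Fintype A] : Set (S → A → ℝ) :=
  {π : S → A → ℝ | (∀ s a, 0 ≤ π s a) ∧ ∀ s, ∑ a, π s a = 1}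

/-! The robust Bellman value at `s` depends on a reward `R` only through its row `R s`, and the
rows at `s` of the rectangular hull `C(𝓡)` are exactly the rows at `s` of `𝓡`. -/

section CRect

variable {S A : Type*} {𝓡 : Set (S → A → ℝ)}

lemma subset_CRect : 𝓡 ⊆ CRect 𝓡 :=
  fun R hR _ => ⟨R, hR, rfl⟩

lemma image_eval_CRect (s : S) :
    Function.eval s '' CRect 𝓡 = Function.eval s '' 𝓡 := by
  refine (Set.image_mono subset_CRect).antisymm' ?_
  rintro _ ⟨R, hR, rfl⟩
  obtain ⟨R', hR', hRs⟩ := hR s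
  exact ⟨R', hR', hRs.symm⟩

lemma iInf_CRect_comp_eval {α : Type*} [InfSet α] (f : (A → ℝ) → α) (s : S) :
    ⨅ R : CRect 𝓡, f ((R : S → A → ℝ) s) = ⨅ R : 𝓡, f ((R : S → A → ℝ) s) := by
  have hrange (𝓢 : Set (S → A → ℝ)) :
      Set.range (fun R : 𝓢 => f ((R : S → A → ℝ) s)) = f '' (Function.eval s '' 𝓢) := by
    rw [Set.image_image, Set.image_eq_range]
  rw [iInf, iInf, hrange, hrange, image_eval_CRect]

end CRect

theorem stmt_9_general {S A : Type*} [Fintype S] [Fintype A]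
    (γ : ℝ)
    (P : S → A → S → ℝ)
    (𝓡 : Set (S → A → ℝ))
    (v : S → ℝ) (s : S) :
    (⨆ π : Policies S A, ⨅ R : 𝓡,
      (∑ a, (π : S → A → ℝ) s a * (R : S → A → ℝ) s a +
        γ * ∑ s', Pmat P (π : S → A → ℝ) s s' * v s')) =
    (⨆ π : Policies S A, ⨅ R : CRect 𝓡,
      (∑ a, (π : S → A → ℝ) s a * (R : S → A → ℝ) s a +
        γ * ∑ s', Pmat P (π : S → A → ℝ) s s' * v s')) :=
  iSup_congr fun π =>
    (iInf_CRect_comp_eval (fun r => ∑ a, (π : S → A → ℝ) s a * r a +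
      γ * ∑ s', Pmat P (π : S → A → ℝ) s s' * v s') s).symm

theorem stmt_9 {S A : Type*} [Fintype S] [Fintype A] [Nonempty S] [Nonempty A]
    (γ : ℝ) (hγ0 : 0 ≤ γ) (hγ1 : γ < 1)
    (P : S → A → S → ℝ) (hP : ∀ s a s', 0 ≤ P s a s')
    (hPsum : ∀ s a, ∑ s', P s a s' = 1)
    (𝓡 : Set (S → A → ℝ)) (h𝓡ne : 𝓡.Nonempty) (h𝓡comp : IsCompact 𝓡)
    (v : S → ℝ) (s : S) :
    (⨆ π : Policies S A, ⨅ R : 𝓡,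
      (∑ a, (π : S → A → ℝ) s a * (R : S → A → ℝ) s a +
        γ * ∑ s', Pmat P (π : S → A → ℝ) s s' * v s')) =
    (⨆ π : Policies S A, ⨅ R : CRect 𝓡,
      (∑ a, (π : S → A → ℝ) s a * (R : S → A → ℝ) s a +
        γ * ∑ s', Pmat P (π : S → A → ℝ) s s' * v s')) :=
  stmt_9_general γ P 𝓡 v s
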